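/- Let Y₁, …, Y_m be i.i.d. ℝ^d-valued random variables with E[Y₁] = 0 and E[exp(a|Y₁|²)] ≤ 2 for some constant a > 0, where |·| is the Euclidean norm. Then there exists a constant β > 0 depending only on a and d (not on m) such that for every integer p ≥ 1, E[ |Y₁ + ⋯ + Y_m|^{2p} ] ≤ p! (β m)^p. -/

import Mathlib

/-!
A centered real variable `X` with `E[exp(a X²)] ≤ 2` is sub-Gaussian with variance proxy `10 / a`:
expand `exp(tx) ≤ 1 + tx + (tx)² exp|tx|` and absorb `(tx)² exp|tx|` into `exp(t²/a) exp(a x²)`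
by AM–GM. This applies to every coordinate of every `Yᵢ`; proxies add over independent summands,
so each coordinate of `Y₁ + ⋯ + Y_m` has proxy `10 m / a`. A sub-Gaussian variable with proxy `c`
has `E[X^{2p}] ≤ p! (4 e c)^p`, by comparing `(tX)^{2p}` with `(2p)! (exp(tX) + exp(-tX))` at
`t² = 2p / c`. The coordinates are recombined with `|v|^{2p} ≤ d^{p-1} ∑ₖ vₖ^{2p}`.
-/

open MeasureTheory ProbabilityTheory Real
open scoped NNReal Nat

lemma Real.exp_le_one_add_add_sq_mul_exp_abs (u : ℝ) : exp u ≤ 1 + u + u ^ 2 * exp |u| := by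
  have h1 : 1 ≤ exp |u| := one_le_exp (abs_nonneg u)
  rcases le_or_gt |u| 1 with hu | hu
  · have := (abs_le.1 (abs_exp_sub_one_sub_id_le hu)).2
    nlinarith [sq_nonneg u]
  · have hexp : exp u ≤ exp |u| := exp_le_exp.2 (le_abs_self u)
    have hneg : -|u| ≤ u := neg_abs_le u
    have hsq : u ^ 2 = |u| ^ 2 := (sq_abs u).symm
    nlinarith [mul_nonneg (sub_nonneg.2 hu.le) (sub_nonneg.2 h1)]

lemma abs_mul_le_sq_div_add (t x : ℝ) {a : ℝ} (ha : 0 < a) :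
    |t * x| ≤ t ^ 2 / (2 * a) + a * x ^ 2 / 2 := by
  rw [abs_mul, div_add_div _ _ (by positivity) two_ne_zero, le_div_iff₀ (by positivity)]
  have h := sq_nonneg (|t| - a * |x|)
  rw [sub_sq, mul_pow, sq_abs, sq_abs] at h
  linarith

lemma Real.exp_mul_le_one_add_add_mul_exp_sq (t x : ℝ) {a : ℝ} (ha : 0 < a) :
    exp (t * x) ≤ 1 + t * x + 2 * (t ^ 2 / a) * exp (t ^ 2 / a) * exp (a * x ^ 2) := by
  have hx : x ^ 2 ≤ 2 / a * exp (a * x ^ 2 / 2) := by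
    rw [div_mul_eq_mul_div, le_div_iff₀ ha]
    linarith [add_one_le_exp (a * x ^ 2 / 2)]
  have hexp : exp |t * x| ≤ exp (t ^ 2 / (2 * a) + a * x ^ 2 / 2) :=
    exp_le_exp.2 (abs_mul_le_sq_div_add t x ha)
  have hsplit : exp (a * x ^ 2) = exp (a * x ^ 2 / 2) * exp (a * x ^ 2 / 2) := by
    rw [← exp_add, add_halves]
  have hta : exp (t ^ 2 / (2 * a)) ≤ exp (t ^ 2 / a) :=
    exp_le_exp.2 (div_le_div_of_nonneg_left (sq_nonneg t) ha (by linarith))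
  calc exp (t * x) ≤ 1 + t * x + t ^ 2 * x ^ 2 * exp |t * x| := by
        simpa [mul_pow] using exp_le_one_add_add_sq_mul_exp_abs (t * x)
    _ ≤ 1 + t * x + t ^ 2 * (2 / a * exp (a * x ^ 2 / 2)) *
          exp (t ^ 2 / (2 * a) + a * x ^ 2 / 2) := by gcongr
    _ = 1 + t * x + 2 * (t ^ 2 / a) * exp (t ^ 2 / (2 * a)) * exp (a * x ^ 2) := by
        rw [exp_add, hsplit]; ring
    _ ≤ 1 + t * x + 2 * (t ^ 2 / a) * exp (t ^ 2 / a) * exp (a * x ^ 2) := by gcongr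

lemma Real.pow_two_mul_le_factorial_mul_exp_add_exp_neg (y : ℝ) (n : ℕ) :
    y ^ (2 * n) ≤ (2 * n)! * (exp y + exp (-y)) := by
  have h := pow_div_factorial_le_exp |y| (abs_nonneg y) (2 * n)
  rw [div_le_iff₀ (by positivity), (even_two_mul n).pow_abs] at h
  calc y ^ (2 * n) ≤ exp |y| * (2 * n)! := h
    _ ≤ (2 * n)! * (exp y + exp (-y)) := by rw [mul_comm]; gcongr; exact exp_abs_le y

lemma Nat.two_mul_factorial_two_mul_le {p : ℕ} (hp : p ≠ 0) :
    2 * (2 * p)! ≤ p ! * (8 * p) ^ p := by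
  have hfac : (2 * p)! = p.centralBinom * p ! * p ! := by
    rw [Nat.centralBinom_eq_two_mul_choose, two_mul, Nat.add_choose_mul_factorial_mul_factorial]
  calc 2 * (2 * p)! = 2 * p.centralBinom * p ! * p ! := by rw [hfac]; ring
    _ ≤ 2 ^ p * 4 ^ p * p ! * p ^ p := by
      gcongr
      · exact Nat.le_self_pow hp 2
      · exact p.centralBinom_le_four_pow
      · exact p.factorial_le_pow
    _ = p ! * (8 * p) ^ p := by rw [mul_pow, show 8 = 2 * 4 by rfl, mul_pow]; ring

lemma EuclideanSpace.sq_apply_le_norm_sq {ι : Type*} [Fintype ι] (v : EuclideanSpace ℝ ι)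
    (i : ι) : v i ^ 2 ≤ ‖v‖ ^ 2 := by
  rw [EuclideanSpace.real_norm_sq_eq]
  exact Finset.single_le_sum (f := fun j ↦ v j ^ 2) (fun j _ ↦ sq_nonneg _) (Finset.mem_univ i)

lemma EuclideanSpace.norm_pow_two_mul_le {ι : Type*} [Fintype ι] (v : EuclideanSpace ℝ ι)
    {p : ℕ} (hp : p ≠ 0) : ‖v‖ ^ (2 * p) ≤ Fintype.card ι ^ (p - 1) * ∑ i, v i ^ (2 * p) := by
  obtain ⟨q, rfl⟩ := Nat.exists_eq_add_one_of_ne_zero hp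
  rw [pow_mul, EuclideanSpace.real_norm_sq_eq]
  have h := pow_sum_le_card_mul_sum_pow (s := Finset.univ) (fun i _ ↦ sq_nonneg (v i)) q
  rw [Finset.card_univ] at h
  simpa only [← pow_mul, Nat.add_sub_cancel] using h

section

variable {Ω : Type*} {mΩ : MeasurableSpace Ω} {μ : Measure Ω}

theorem ProbabilityTheory.hasSubgaussianMGF_of_lintegral_exp_sq_le_two [IsProbabilityMeasure μ]
    {X : Ω → ℝ} {a : ℝ} (ha : 0 < a) (hX : Integrable X μ) (hX0 : μ[X] = 0)
    (hexp : ∫⁻ ω, ENNReal.ofReal (exp (a * X ω ^ 2)) ∂μ ≤ 2) :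
    HasSubgaussianMGF X (10 / a).toNNReal μ := by
  have hexp_nonneg : 0 ≤ᵐ[μ] fun ω ↦ exp (a * X ω ^ 2) := ae_of_all _ fun ω ↦ (exp_pos _).le
  have hexp_meas : AEStronglyMeasurable (fun ω ↦ exp (a * X ω ^ 2)) μ := by
    have := hX.aestronglyMeasurable; fun_prop
  have hexp_int : Integrable (fun ω ↦ exp (a * X ω ^ 2)) μ :=
    ⟨hexp_meas, (hasFiniteIntegral_iff_ofReal hexp_nonneg).2 (hexp.trans_lt ENNReal.ofNat_lt_top)⟩
  have hexp_le : ∫ ω, exp (a * X ω ^ 2) ∂μ ≤ 2 := by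
    rw [integral_eq_lintegral_of_nonneg_ae hexp_nonneg hexp_meas]
    exact ENNReal.toReal_le_of_le_ofReal zero_le_two (by simpa using hexp)
  have hlin_int (t : ℝ) : Integrable (fun ω ↦ 1 + t * X ω) μ :=
    (integrable_const 1).add (hX.const_mul t)
  set B : ℝ → Ω → ℝ :=
    fun t ω ↦ 1 + t * X ω + 2 * (t ^ 2 / a) * exp (t ^ 2 / a) * exp (a * X ω ^ 2)
  have hB_int (t : ℝ) : Integrable (B t) μ := (hlin_int t).add (hexp_int.const_mul _)
  have hB_le (t : ℝ) (ω : Ω) : exp (t * X ω) ≤ B t ω :=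
    exp_mul_le_one_add_add_mul_exp_sq t (X ω) ha
  have hint (t : ℝ) : Integrable (fun ω ↦ exp (t * X ω)) μ := by
    refine (hB_int t).mono' (by have := hX.aestronglyMeasurable; fun_prop)
      (ae_of_all _ fun ω ↦ ?_)
    rw [norm_of_nonneg (exp_pos _).le]
    exact hB_le t ω
  refine ⟨hint, fun t ↦ ?_⟩
  set s := t ^ 2 / a
  have hs : 0 ≤ s := by positivity
  calc mgf X μ t ≤ ∫ ω, B t ω ∂μ := integral_mono (hint t) (hB_int t) (hB_le t)
    _ = 1 + 2 * s * exp s * ∫ ω, exp (a * X ω ^ 2) ∂μ := by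
        rw [integral_add (hlin_int t) (hexp_int.const_mul _),
          integral_add (integrable_const 1) (hX.const_mul t), integral_const_mul,
          integral_const_mul, hX0]
        simp [s]
    _ ≤ (4 * s + 1) * exp s := by
        nlinarith [mul_le_mul_of_nonneg_left hexp_le (by positivity : 0 ≤ 2 * s * exp s),
          one_le_exp hs]
    _ ≤ exp (4 * s) * exp s := by gcongr; exact add_one_le_exp _
    _ = exp (↑(10 / a).toNNReal * t ^ 2 / 2) := by
        rw [← exp_add, Real.coe_toNNReal _ (by positivity)]; congr 1; ring

theorem ProbabilityTheory.HasSubgaussianMGF.integrable_pow {X : Ω → ℝ} {c : ℝ≥0}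
    (h : HasSubgaussianMGF X c μ) (n : ℕ) : Integrable (fun ω ↦ X ω ^ n) μ :=
  integrable_pow_of_integrable_exp_mul one_ne_zero (h.integrable_exp_mul 1)
    (h.integrable_exp_mul (-1)) n

theorem ProbabilityTheory.HasSubgaussianMGF.integral_pow_two_mul_le {X : Ω → ℝ} {c : ℝ≥0}
    (h : HasSubgaussianMGF X c μ) {p : ℕ} (hp : p ≠ 0) :
    ∫ ω, X ω ^ (2 * p) ∂μ ≤ p ! * (4 * exp 1 * c) ^ p := by
  rcases eq_zero_or_pos c with rfl | hc
  · have hX : (fun ω ↦ X ω ^ (2 * p)) =ᵐ[μ] 0 := by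
      filter_upwards [h.ae_eq_zero_of_hasSubgaussianMGF_zero] with ω hω
      simp [hω, hp]
    simp [integral_congr_ae hX, hp]
  -- `t` is chosen so that `c t² / 2 = p`.
  set t := √(2 * p / c)
  have ht : 0 < t := sqrt_pos.2 (by positivity)
  have ht2 : t ^ 2 = 2 * p / c := sq_sqrt (by positivity)
  have hmoment : (∫ ω, X ω ^ (2 * p) ∂μ) * t ^ (2 * p) ≤ (2 * p)! * (2 * exp p) :=
    calc (∫ ω, X ω ^ (2 * p) ∂μ) * t ^ (2 * p) = ∫ ω, (t * X ω) ^ (2 * p) ∂μ := by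
          rw [← integral_mul_const]; simp_rw [mul_pow, mul_comm]
      _ ≤ ∫ ω, (2 * p)! * (exp (t * X ω) + exp (-t * X ω)) ∂μ := by
          refine integral_mono ?_ ?_ fun ω ↦ ?_
          · simpa only [mul_pow] using (h.integrable_pow (2 * p)).const_mul (t ^ (2 * p))
          · exact ((h.integrable_exp_mul t).add (h.integrable_exp_mul (-t))).const_mul _
          · simpa using pow_two_mul_le_factorial_mul_exp_add_exp_neg (t * X ω) p
      _ = (2 * p)! * (mgf X μ t + mgf X μ (-t)) := by
          rw [integral_const_mul,
            integral_add (h.integrable_exp_mul t) (h.integrable_exp_mul (-t))]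
          rfl
      _ ≤ (2 * p)! * (exp (c * t ^ 2 / 2) + exp (c * (-t) ^ 2 / 2)) := by
          gcongr <;> exact h.mgf_le _
      _ = (2 * p)! * (2 * exp p) := by
          rw [neg_sq, ht2]; field_simp; ring_nf
  have hfac : (2 * (2 * p)! : ℝ) ≤ p ! * (8 * p) ^ p := by
    exact_mod_cast Nat.two_mul_factorial_two_mul_le hp
  have htp : t ^ (2 * p) = (2 * p / c) ^ p := by rw [pow_mul, ht2]
  calc ∫ ω, X ω ^ (2 * p) ∂μ ≤ (2 * p)! * (2 * exp p) / t ^ (2 * p) := by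
        rw [le_div_iff₀ (by positivity)]; exact hmoment
    _ = 2 * (2 * p)! * (exp 1 * c / (2 * p)) ^ p := by
        rw [htp, ← exp_one_pow, div_pow, div_pow, mul_pow]; field_simp; ring
    _ ≤ p ! * (8 * p) ^ p * (exp 1 * c / (2 * p)) ^ p := by gcongr
    _ = p ! * (4 * exp 1 * c) ^ p := by
        rw [mul_assoc, ← mul_pow]; congr 2; field_simp; ring

theorem ProbabilityTheory.lintegral_norm_pow_two_mul_le_of_hasSubgaussianMGF {ι : Type*}
    [Fintype ι] {Z : Ω → EuclideanSpace ℝ ι} {c : ℝ≥0}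
    (hZ : ∀ i, HasSubgaussianMGF (fun ω ↦ Z ω i) c μ) {p : ℕ} (hp : p ≠ 0) :
    ∫⁻ ω, ENNReal.ofReal (‖Z ω‖ ^ (2 * p)) ∂μ
      ≤ ENNReal.ofReal (p ! * (4 * exp 1 * c * Fintype.card ι) ^ p) := by
  set n := Fintype.card ι
  have hint : Integrable (fun ω ↦ (n : ℝ) ^ (p - 1) * ∑ i, Z ω i ^ (2 * p)) μ :=
    (integrable_finsetSum _ fun i _ ↦ (hZ i).integrable_pow _).const_mul _
  calc ∫⁻ ω, ENNReal.ofReal (‖Z ω‖ ^ (2 * p)) ∂μ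
      ≤ ∫⁻ ω, ENNReal.ofReal ((n : ℝ) ^ (p - 1) * ∑ i, Z ω i ^ (2 * p)) ∂μ :=
        lintegral_mono fun ω ↦ ENNReal.ofReal_le_ofReal (EuclideanSpace.norm_pow_two_mul_le _ hp)
    _ = ENNReal.ofReal (∫ ω, (n : ℝ) ^ (p - 1) * ∑ i, Z ω i ^ (2 * p) ∂μ) :=
        (ofReal_integral_eq_lintegral_ofReal hint <| ae_of_all _ fun ω ↦ mul_nonneg
          (by positivity) (Finset.sum_nonneg fun i _ ↦ (even_two_mul p).pow_nonneg _)).symm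
    _ ≤ ENNReal.ofReal ((n : ℝ) ^ (p - 1) * (n * (p ! * (4 * exp 1 * c) ^ p))) := by
        refine ENNReal.ofReal_le_ofReal ?_
        rw [integral_const_mul, integral_finsetSum _ fun i _ ↦ (hZ i).integrable_pow _]
        gcongr
        simpa [n] using Finset.sum_le_sum fun i (_ : i ∈ Finset.univ) ↦
          (hZ i).integral_pow_two_mul_le hp
    _ = ENNReal.ofReal (p ! * (4 * exp 1 * c * n) ^ p) := by
        rw [← mul_assoc, pow_sub_one_mul hp, mul_pow]; ring_nf

end

/-- for i.i.d. centered `ℝ^d`-valued random variables with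
`E[exp(a|Y₁|²)] ≤ 2`, there is a constant `β > 0` depending only on `a` and `d`
(not on `m`) such that `E[|Y₁ + ⋯ + Y_m|^{2p}] ≤ p! (β m)^p` for every `p ≥ 1`. -/
theorem iid_even_moment_bound (d : ℕ) (a : ℝ) (ha : 0 < a) :
    ∃ β : ℝ, 0 < β ∧
      ∀ (Ω : Type) (_ : MeasurableSpace Ω) (μ : Measure Ω), IsProbabilityMeasure μ →
        ∀ (m : ℕ) (Y : Fin m → Ω → EuclideanSpace ℝ (Fin d)),
          (∀ i, Measurable (Y i)) →
          iIndepFun Y μ →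
          (∀ i j, IdentDistrib (Y i) (Y j) μ μ) →
          (∀ i, Integrable (Y i) μ) →
          (∀ i, ∫ ω, Y i ω ∂μ = 0) →
          (∀ i, ∫⁻ ω, ENNReal.ofReal (Real.exp (a * ‖Y i ω‖ ^ 2)) ∂μ ≤ 2) →
          ∀ p : ℕ, 1 ≤ p →
            ∫⁻ ω, ENNReal.ofReal (‖∑ i, Y i ω‖ ^ (2 * p)) ∂μ
              ≤ ENNReal.ofReal (p.factorial * (β * m) ^ p) := by
  refine ⟨40 * exp 1 * (d + 1) / a, by positivity, ?_⟩
  intro Ω _ μ _ m Y _ hindep _ hint hmean hexp p hp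
  have hcoord (i : Fin m) (k : Fin d) :
      HasSubgaussianMGF (fun ω ↦ Y i ω k) (10 / a).toNNReal μ := by
    refine hasSubgaussianMGF_of_lintegral_exp_sq_le_two ha
      ((EuclideanSpace.proj (𝕜 := ℝ) k).integrable_comp (hint i)) ?_
      ((lintegral_mono fun ω ↦ ?_).trans (hexp i))
    · simpa [hmean i] using (EuclideanSpace.proj (𝕜 := ℝ) k).integral_comp_comm (hint i)
    · gcongr ENNReal.ofReal (exp (a * ?_))
      exact EuclideanSpace.sq_apply_le_norm_sq _ k
  have hsum (k : Fin d) :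
      HasSubgaussianMGF (fun ω ↦ (∑ i, Y i ω) k) (m * (10 / a).toNNReal) μ := by
    simpa using HasSubgaussianMGF.sum_of_iIndepFun (s := Finset.univ)
      (hindep.comp (fun _ v ↦ v k) fun _ ↦ by fun_prop) fun i _ ↦ hcoord i k
  calc ∫⁻ ω, ENNReal.ofReal (‖∑ i, Y i ω‖ ^ (2 * p)) ∂μ
      ≤ ENNReal.ofReal (p ! * (4 * exp 1 * ↑(m * (10 / a).toNNReal) * d) ^ p) := by
        simpa using lintegral_norm_pow_two_mul_le_of_hasSubgaussianMGF hsum (by omega : p ≠ 0)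
    _ ≤ ENNReal.ofReal (p ! * (40 * exp 1 * (d + 1) / a * m) ^ p) := by
        refine ENNReal.ofReal_le_ofReal ?_
        rw [NNReal.coe_mul, NNReal.coe_natCast, Real.coe_toNNReal _ (by positivity),
          show 40 * exp 1 * (d + 1) / a * m = 4 * exp 1 * (m * (10 / a)) * (d + 1) by ring]
        gcongr
        linarith
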